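/- Let n ≥ 2. If 2n + 1 and 2n + 3 are both prime (twin primes), then the prime sum graph G_{2n} contains a Hamilton cycle; moreover this Hamilton cycle can be chosen so that the sum of every pair of adjacent vertices on the cycle lies in the set {3, 2n+1, 2n+3}. -/

import Mathlib

/-! Listing `{1, …, 2n}` in the cyclic order `1, 2n, 3, 2n - 2, 5, …, 2n - 1, 2`, consecutive
entries sum alternately to `2n + 1` and `2n + 3`, and the closing pair `2, 1` sums to `3`; when
`2n + 1` and `2n + 3` are prime, this order is therefore a Hamilton cycle of `G_{2n}`. -/

/-- The prime sum graph of order `m`: vertices are `{1, ..., m}`, and two distinct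
vertices are adjacent iff their sum is prime. -/
def primeSumGraph (m : ℕ) : SimpleGraph (Finset.Icc 1 m) where
  Adj i j := i ≠ j ∧ Nat.Prime (i.1 + j.1)
  symm := by
    constructor
    rintro i j ⟨h1, h2⟩
    exact ⟨h1.symm, by rwa [Nat.add_comm]⟩
  loopless := by constructor; rintro i ⟨h, _⟩; exact h rfl

namespace SimpleGraph

theorem cycleGraph_adj_iff_eq_add_one {k : ℕ} {i j : Fin (k + 2)} :
    (cycleGraph (k + 2)).Adj i j ↔ i = j + 1 ∨ j = i + 1 := by
  rw [cycleGraph_adj, sub_eq_iff_eq_add', sub_eq_iff_eq_add']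

theorem cycleGraph.isHamiltonianCycle_cycle (k : ℕ) : (cycleGraph.cycle k).IsHamiltonianCycle :=
  Walk.isHamiltonianCycle_iff_isCycle_and_length_eq.mpr
    ⟨cycleGraph.isCycle_cycle, by simp [cycleGraph.length_cycle]⟩

variable {V : Type*} [DecidableEq V] {G : SimpleGraph V}

theorem exists_isHamiltonianCycle_of_equiv_fin {m : ℕ} [NeZero m] (hm : 3 ≤ m)
    (f : Fin m ≃ V) (hf : ∀ i, G.Adj (f i) (f (i + 1))) :
    ∃ a, ∃ w : G.Walk a a, w.IsHamiltonianCycle ∧ ∀ e ∈ w.edges, ∃ i, e = s(f i, f (i + 1)) := by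
  obtain ⟨k, rfl⟩ : ∃ k, m = k + 3 := ⟨m - 3, by omega⟩
  have hadj : ∀ {i j}, (cycleGraph (k + 3)).Adj i j → G.Adj (f i) (f j) := by
    intro i j h
    rcases cycleGraph_adj_iff_eq_add_one.mp h with rfl | rfl
    · exact (hf j).symm
    · exact hf i
  let φ : cycleGraph (k + 3) →g G := ⟨f, hadj⟩
  refine ⟨φ 0, (cycleGraph.cycle k).map φ,
    (cycleGraph.isHamiltonianCycle_cycle k).map (f := φ) f.bijective, fun e he => ?_⟩
  rw [Walk.edges_map, List.mem_map] at he
  obtain ⟨⟨i, j⟩, hij, rfl⟩ := he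
  rcases cycleGraph_adj_iff_eq_add_one.mp (Walk.adj_of_mem_edges _ hij) with rfl | rfl
  · exact ⟨j, Sym2.eq_swap⟩
  · exact ⟨i, rfl⟩

end SimpleGraph

theorem primeSumGraph_adj_of_prime_of_odd {m : ℕ} {u v : Finset.Icc 1 m}
    (hp : (u.1 + v.1).Prime) (hodd : Odd (u.1 + v.1)) : (primeSumGraph m).Adj u v := by
  refine ⟨?_, hp⟩
  rintro rfl
  exact Nat.not_even_iff_odd.mpr hodd ⟨u.1, rfl⟩

theorem Fin.val_add_one_eq_ite {m : ℕ} [NeZero m] (i : Fin m) :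
    ((i + 1 : Fin m) : ℕ) = if i.1 + 1 = m then 0 else i.1 + 1 := by
  rw [Fin.val_add, Fin.val_one', Nat.add_mod_mod]
  split_ifs with h
  · rw [h, Nat.mod_self]
  · exact Nat.mod_eq_of_lt (by omega)

def zigzag (n : ℕ) : Fin (2 * n) ≃ Finset.Icc 1 (2 * n) where
  toFun i := ⟨if i.1 % 2 = 0 then i.1 + 1 else 2 * n + 1 - i.1, by
    have := i.2; simp only [Finset.mem_Icc]; split_ifs <;> omega⟩
  invFun v := ⟨if v.1 % 2 = 1 then v.1 - 1 else 2 * n + 1 - v.1, by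
    have := Finset.mem_Icc.mp v.2; split_ifs <;> omega⟩
  left_inv i := by
    have := i.2; ext; dsimp only; split_ifs <;> omega
  right_inv v := by
    have := Finset.mem_Icc.mp v.2; ext; dsimp only; split_ifs <;> omega

theorem zigzag_add_zigzag_add_one {n : ℕ} [NeZero (2 * n)] (i : Fin (2 * n)) :
    (zigzag n i).1 + (zigzag n (i + 1)).1 ∈ ({3, 2 * n + 1, 2 * n + 3} : Set ℕ) := by
  have := i.2
  simp only [zigzag, Equiv.coe_fn_mk, Fin.val_add_one_eq_ite, Set.mem_insert_iff,
    Set.mem_singleton_iff]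
  split_ifs <;> omega

/-- If `2n + 1` and `2n + 3` are twin primes, then `G_{2n}` has a Hamilton cycle,
and moreover one in which every pair of adjacent vertices sums to an element of
`{3, 2n+1, 2n+3}`. -/
theorem primeSumGraph_hamiltonian_of_twin_primes (n : ℕ) (hn : 2 ≤ n)
    (h1 : Nat.Prime (2 * n + 1)) (h3 : Nat.Prime (2 * n + 3)) :
    ∃ a, ∃ w : (primeSumGraph (2 * n)).Walk a a, w.IsHamiltonianCycle ∧
      ∀ u v : Finset.Icc 1 (2 * n), s(u, v) ∈ w.edges →
        u.1 + v.1 ∈ ({3, 2 * n + 1, 2 * n + 3} : Set ℕ) := by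
  have : NeZero (2 * n) := ⟨by omega⟩
  have prime_odd : ∀ s ∈ ({3, 2 * n + 1, 2 * n + 3} : Set ℕ), s.Prime ∧ Odd s := by
    rintro s (rfl | rfl | rfl)
    exacts [⟨Nat.prime_three, ⟨1, rfl⟩⟩, ⟨h1, ⟨n, rfl⟩⟩, ⟨h3, ⟨n + 1, by ring⟩⟩]
  have hadj (i : Fin (2 * n)) : (primeSumGraph (2 * n)).Adj (zigzag n i) (zigzag n (i + 1)) :=
    have ⟨hp, hodd⟩ := prime_odd _ (zigzag_add_zigzag_add_one i)
    primeSumGraph_adj_of_prime_of_odd hp hodd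
  obtain ⟨a, w, hw, hedges⟩ :=
    SimpleGraph.exists_isHamiltonianCycle_of_equiv_fin (by omega) (zigzag n) hadj
  refine ⟨a, w, hw, fun u v huv => ?_⟩
  obtain ⟨i, hi⟩ := hedges _ huv
  rcases Sym2.eq_iff.mp hi with ⟨rfl, rfl⟩ | ⟨rfl, rfl⟩
  · exact zigzag_add_zigzag_add_one i
  · rw [add_comm (zigzag n (i + 1)).1]
    exact zigzag_add_zigzag_add_one i
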